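/- Let A ∈ ℝ^{N×N} be a signed adjacency matrix that is structurally unbalanced, assume the underlying graph of A is connected, let L_s be its signed Laplacian, and let k > 0. Then for every initial state x₀ ∈ ℝ^N, the solution x(t) = exp(−k t L_s) x₀ of ẋ = −k L_s x satisfies lim_{t→∞} x(t) = 0; that is, the agents achieve trivial consensus. -/

import Mathlib

/-! `2 xᵀ L_s x = ∑ᵢⱼ (|aᵢⱼ| (xᵢ² + xⱼ²) - 2 aᵢⱼ xᵢ xⱼ)`, and every summand is nonnegative,
vanishing for `aᵢⱼ ≠ 0` only if `|xᵢ| = |xⱼ|` and `aᵢⱼ xᵢ xⱼ ≥ 0`. So a nonzero `x` with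
`xᵀ L_s x = 0` has `|xᵢ|` constant along edges, hence constant on the connected graph, and `x`
divided by that constant is a signature balancing `A`. Thus structural imbalance makes `L_s`
positive definite, and diagonalizing `L_s` shows that `exp(-t L_s) = U diag(exp(-t λᵢ)) Uᵀ → 0`. -/

open Matrix Filter Topology

theorem two_mul_mul_le_abs_mul_sq_add_sq (a x y : ℝ) :
    2 * a * x * y ≤ |a| * (x ^ 2 + y ^ 2) := by
  have h : a * x * y ≤ |a| * |x| * |y| := by simpa only [abs_mul] using le_abs_self (a * x * y)
  nlinarith [abs_nonneg a, two_mul_le_add_sq |x| |y|, sq_abs x, sq_abs y]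

theorem abs_eq_abs_of_two_mul_mul_eq {a x y : ℝ} (ha : a ≠ 0)
    (h : 2 * a * x * y = |a| * (x ^ 2 + y ^ 2)) : |x| = |y| := by
  have hle : a * x * y ≤ |a| * |x| * |y| := by
    simpa only [abs_mul] using le_abs_self (a * x * y)
  have hsq : |a| * (|x| - |y|) ^ 2 ≤ 0 := by
    have : |a| * (|x| - |y|) ^ 2 = |a| * (x ^ 2 + y ^ 2) - 2 * (|a| * |x| * |y|) := by
      rw [← sq_abs x, ← sq_abs y]; ring
    linarith
  have : (|x| - |y|) ^ 2 = 0 :=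
    le_antisymm (nonpos_of_mul_nonpos_right hsq (abs_pos.mpr ha)) (sq_nonneg _)
  linarith [pow_eq_zero_iff two_ne_zero |>.mp this]

theorem SimpleGraph.Preconnected.apply_eq_of_forall_adj {V α : Type*} {G : SimpleGraph V}
    (hG : G.Preconnected) {f : V → α} (hf : ∀ u v, G.Adj u v → f u = f v) (u v : V) :
    f u = f v := by
  simpa [Relation.reflTransGen_eq_self] using
    ((SimpleGraph.reachable_iff_reflTransGen u v).mp (hG u v)).lift f hf

def IsStructurallyBalanced {n : Type*} (A : Matrix n n ℝ) : Prop :=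
  ∃ d : n → ℝ, (∀ i, d i = 1 ∨ d i = -1) ∧ ∀ i j, 0 ≤ d i * A i j * d j

theorem isStructurallyBalanced_of_two_mul_mul_eq {n : Type*} {A : Matrix n n ℝ}
    (hconn : (SimpleGraph.fromRel fun i j => A i j ≠ 0).Preconnected) {x : n → ℝ} (hx : x ≠ 0)
    (hx₀ : ∀ i j, 2 * A i j * x i * x j = |A i j| * (x i ^ 2 + x j ^ 2)) :
    IsStructurallyBalanced A := by
  have habs : ∀ i j, |x i| = |x j| := hconn.apply_eq_of_forall_adj fun i j hij => by
    obtain ⟨-, hij | hji⟩ := hij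
    · exact abs_eq_abs_of_two_mul_mul_eq hij (hx₀ i j)
    · exact (abs_eq_abs_of_two_mul_mul_eq hji (hx₀ j i)).symm
  obtain ⟨i₀, hi₀⟩ := Function.ne_iff.mp hx
  have hc : 0 < |x i₀| := abs_pos.mpr hi₀
  refine ⟨fun i => x i / |x i₀|, fun i => ?_, fun i j => ?_⟩ <;> dsimp only
  · rcases abs_eq hc.le |>.mp (habs i i₀) with h | h
    · exact .inl (by rw [h, div_self hc.ne'])
    · exact .inr (by rw [h, neg_div, div_self hc.ne'])
  · have : 0 ≤ A i j * x i * x j := by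
      nlinarith [hx₀ i j, abs_nonneg (A i j), sq_nonneg (x i), sq_nonneg (x j)]
    calc (0 : ℝ) ≤ A i j * x i * x j / |x i₀| ^ 2 := by positivity
      _ = _ := by ring

section SignedLaplacian

variable {n : Type*} [Fintype n] [DecidableEq n]

def signedLaplacian (A : Matrix n n ℝ) : Matrix n n ℝ :=
  of fun i j => if i = j then ∑ k, |A i k| else -A i j

theorem signedLaplacian_eq_diagonal_sub {A : Matrix n n ℝ} (hdiag : ∀ i, A i i = 0) :
    signedLaplacian A = diagonal (fun i => ∑ k, |A i k|) - A := by
  ext i j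
  by_cases h : i = j
  · subst h; simp [signedLaplacian, hdiag]
  · simp [signedLaplacian, h]

theorem isHermitian_signedLaplacian {A : Matrix n n ℝ} (hA : A.IsSymm) :
    (signedLaplacian A).IsHermitian := by
  ext i j
  by_cases h : i = j
  · subst h; simp
  · simp [signedLaplacian, h, Ne.symm h, hA.apply]

theorem two_mul_dotProduct_signedLaplacian_mulVec {A : Matrix n n ℝ} (hA : A.IsSymm)
    (hdiag : ∀ i, A i i = 0) (x : n → ℝ) :
    2 * (x ⬝ᵥ signedLaplacian A *ᵥ x) =
      ∑ i, ∑ j, (|A i j| * (x i ^ 2 + x j ^ 2) - 2 * A i j * x i * x j) := by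
  have hquad : x ⬝ᵥ signedLaplacian A *ᵥ x =
      ∑ i, ∑ j, (|A i j| * x i ^ 2 - A i j * x i * x j) := by
    rw [signedLaplacian_eq_diagonal_sub hdiag, sub_mulVec, dotProduct_sub]
    simp only [dotProduct, mulVec_diagonal]
    simp only [mulVec, dotProduct, Finset.sum_mul, Finset.mul_sum, ← Finset.sum_sub_distrib]
    exact Finset.sum_congr rfl fun i _ => Finset.sum_congr rfl fun j _ => by ring
  have hswap : ∑ i, ∑ j, |A i j| * x j ^ 2 = ∑ i, ∑ j, |A i j| * x i ^ 2 := by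
    rw [Finset.sum_comm]; simp only [hA.apply]
  have hdouble : ∑ i, ∑ j, 2 * A i j * x i * x j = 2 * ∑ i, ∑ j, A i j * x i * x j := by
    simp only [Finset.mul_sum, mul_assoc]
  simp only [hquad, mul_add, Finset.sum_sub_distrib, Finset.sum_add_distrib, hswap, hdouble]
  ring

theorem posDef_signedLaplacian {A : Matrix n n ℝ} (hA : A.IsSymm) (hdiag : ∀ i, A i i = 0)
    (hconn : (SimpleGraph.fromRel fun i j => A i j ≠ 0).Preconnected)
    (hunbal : ¬ IsStructurallyBalanced A) : (signedLaplacian A).PosDef := by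
  refine posDef_iff_dotProduct_mulVec.mpr ⟨isHermitian_signedLaplacian hA, fun x hx => ?_⟩
  rw [star_trivial]
  have hterm : ∀ i j, 0 ≤ |A i j| * (x i ^ 2 + x j ^ 2) - 2 * A i j * x i * x j := fun i j =>
    sub_nonneg.mpr (two_mul_mul_le_abs_mul_sq_add_sq _ _ _)
  have hsum := two_mul_dotProduct_signedLaplacian_mulVec hA hdiag x
  refine lt_of_le_of_ne ?_ fun h0 => hunbal ?_
  · have : 0 ≤ 2 * (x ⬝ᵥ signedLaplacian A *ᵥ x) :=
      hsum ▸ Finset.sum_nonneg fun i _ => Finset.sum_nonneg fun j _ => hterm i j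
    linarith
  · rw [← h0, mul_zero, eq_comm, Finset.sum_eq_zero_iff_of_nonneg fun i _ =>
      Finset.sum_nonneg fun j _ => hterm i j] at hsum
    refine isStructurallyBalanced_of_two_mul_mul_eq hconn hx fun i j => ?_
    have := (Finset.sum_eq_zero_iff_of_nonneg fun j _ => hterm i j).mp
      (hsum i (Finset.mem_univ i)) j (Finset.mem_univ j)
    linarith

theorem Matrix.IsHermitian.exp_smul {L : Matrix n n ℝ} (hL : L.IsHermitian) (s : ℝ) :
    NormedSpace.exp (s • L) = (hL.eigenvectorUnitary : Matrix n n ℝ) *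
      diagonal (fun i => Real.exp (s * hL.eigenvalues i)) *
        star (hL.eigenvectorUnitary : Matrix n n ℝ) := by
  have hU : (hL.eigenvectorUnitary : Matrix n n ℝ)⁻¹ = star hL.eigenvectorUnitary :=
    inv_eq_left_inv (Unitary.coe_star_mul_self _)
  have hconj : s • L = hL.eigenvectorUnitary * diagonal (s • hL.eigenvalues) *
      (hL.eigenvectorUnitary : Matrix n n ℝ)⁻¹ := by
    conv_lhs => rw [hL.spectral_theorem]
    simp [hU, diagonal_smul]
  rw [hconj, exp_conj _ _ (Unitary.isUnit_coe ..), exp_diagonal, hU, Pi.exp_def,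
    Real.exp_eq_exp_ℝ]
  rfl

theorem Matrix.PosDef.tendsto_exp_neg_smul_mulVec {L : Matrix n n ℝ} (hL : L.PosDef)
    (x : n → ℝ) : Tendsto (fun t : ℝ => NormedSpace.exp ((-t) • L) *ᵥ x) atTop (𝓝 0) := by
  set U := (hL.1.eigenvectorUnitary : Matrix n n ℝ)
  have hdiag : Tendsto (fun t : ℝ => diagonal fun i => Real.exp (-t * hL.1.eigenvalues i))
      atTop (𝓝 0) := by
    rw [← diagonal_zero]
    refine (continuous_id.matrix_diagonal.tendsto _).comp (tendsto_pi_nhds.mpr fun i => ?_)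
    exact Real.tendsto_exp_atBot.comp <|
      tendsto_neg_atTop_atBot.atBot_mul_const (hL.eigenvalues_pos i)
  have hconj := (tendsto_const_nhds (x := U)).mul hdiag |>.mul (tendsto_const_nhds (x := star U))
  have hmulVec : Continuous fun M : Matrix n n ℝ => M *ᵥ x :=
    continuous_id.matrix_mulVec continuous_const
  simp_rw [hL.1.exp_smul]
  simpa [Function.comp_def] using (hmulVec.tendsto _).comp hconj

end SignedLaplacian

/-- For a structurally unbalanced signed adjacency matrix `A` with
connected underlying graph, signed Laplacian `L`, and `k > 0`, the solution
`x(t) = exp(-k t L) x₀` of `ẋ = -k L x` converges to `0`: the agents achieve trivial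
consensus. -/
theorem trivial_consensus_SUB
    (N : ℕ) (A : Matrix (Fin N) (Fin N) ℝ)
    (hsym : A.IsSymm) (hdiag : ∀ i, A i i = 0)
    (hunbal : ¬ ∃ d : Fin N → ℝ, (∀ i, d i = 1 ∨ d i = -1) ∧ ∀ i j, 0 ≤ d i * A i j * d j)
    (hconn : (SimpleGraph.fromRel (fun i j : Fin N => A i j ≠ 0)).Connected)
    (L : Matrix (Fin N) (Fin N) ℝ)
    (hL : ∀ i j, L i j = if i = j then ∑ k, |A i k| else -A i j)
    (k : ℝ) (hk : 0 < k) (x₀ : Fin N → ℝ) :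
    Filter.Tendsto (fun t : ℝ => NormedSpace.exp ((-(k * t)) • L) *ᵥ x₀)
      Filter.atTop (nhds 0) := by
  obtain rfl : L = signedLaplacian A := Matrix.ext hL
  have hpos : (signedLaplacian A).PosDef :=
    posDef_signedLaplacian hsym hdiag hconn.preconnected hunbal
  exact (hpos.tendsto_exp_neg_smul_mulVec x₀).comp (tendsto_id.const_mul_atTop hk)
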